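/- Let (A, ∘, •) be a totally compatible di-algebra over a commutative ring k. Let i, j, a, b be natural numbers and let p, r be natural numbers with p + 1 + r = i + j + 1. For every list x₁,…,x_p of p elements of A, every list y₀,…,y_{a+b} of a+b+1 elements of A, and every list z₁,…,z_r of r elements of A, substituting the element μ_{a,b}(y₀,…,y_{a+b}) as the (p+1)-st argument of μ_{i,j} gives μ_{i,j}(x₁,…,x_p, μ_{a,b}(y₀,…,y_{a+b}), z₁,…,z_r) = μ_{i+a, j+b}(x₁,…,x_p, y₀,…,y_{a+b}, z₁,…,z_r). -/
import Mathlib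


/-- A pair of `k`-bilinear operations `a` ("∘") and `b` ("•") on a `k`-module `A`
is a *totally compatible di-algebra structure* if `a` and `b` are each associative
and `(x∘y)•z = x∘(y•z) = (x•y)∘z = x•(y∘z)` for all `x y z`. -/
def IsTotallyCompatibleDialgebra {k A : Type*} [CommRing k] [AddCommGroup A] [Module k A]
    (a b : A →ₗ[k] A →ₗ[k] A) : Prop :=
  (∀ x y z : A, a (a x y) z = a x (a y z)) ∧
  (∀ x y z : A, b (b x y) z = b x (b y z)) ∧
  (∀ x y z : A, b (a x y) z = a x (b y z)) ∧
  (∀ x y z : A, a x (b y z) = a (b x y) z) ∧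
  (∀ x y z : A, a (b x y) z = b x (a y z))

/-- The left-associated product `(⋯((x₀ op₁ x₁) op₂ x₂) ⋯ opₙ xₙ)`, where the
operations are recorded as booleans paired with the elements: `true` stands for
the operation `a` ("∘") and `false` for `b` ("•"). -/
def leftAssocProd {k A : Type*} [CommRing k] [AddCommGroup A] [Module k A]
    (a b : A →ₗ[k] A →ₗ[k] A) (x₀ : A) (l : List (Bool × A)) : A :=
  l.foldl (fun acc p => if p.1 then a acc p.2 else b acc p.2) x₀

/-- The operation `μ_{i,j}` of a totally compatible di-algebra, applied to a list
`x₀ :: [x₁, …, x_{i+j}]` of `i + j + 1` elements: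
`μ_{i,j}(x₀,…,x_{i+j}) = (((x₀ ∘ x₁) ∘ ⋯ ∘ x_i) • x_{i+1}) • ⋯ • x_{i+j}`,
the left-associated product whose first `i` operations are `∘` (i.e. `a`) and
whose last `j` operations are `•` (i.e. `b`).  (On the empty list, which never
occurs under the length hypotheses below, it is defined to be `0`.) -/
def muOp {k A : Type*} [CommRing k] [AddCommGroup A] [Module k A]
    (a b : A →ₗ[k] A →ₗ[k] A) (i j : ℕ) : List A → A
  | [] => 0
  | x₀ :: xs => leftAssocProd a b x₀ ((List.replicate i true ++ List.replicate j false).zip xs)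

section Aux
variable {k A : Type*} [CommRing k] [AddCommGroup A] [Module k A]
  (a b : A →ₗ[k] A →ₗ[k] A)

def bop (t : Bool) (x y : A) : A := if t then a x y else b x y

lemma lap_cons (t : Bool) (u x : A) (l : List (Bool × A)) :
    leftAssocProd a b x ((t, u) :: l) = leftAssocProd a b (bop a b t x u) l := rfl

lemma lap_append (x : A) (l₁ l₂ : List (Bool × A)) :
    leftAssocProd a b x (l₁ ++ l₂) = leftAssocProd a b (leftAssocProd a b x l₁) l₂ := by
  simp [leftAssocProd, List.foldl_append]

variable (h : IsTotallyCompatibleDialgebra a b)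
include h

lemma bop_assoc (s t : Bool) (x y z : A) :
    bop a b s x (bop a b t y z) = bop a b t (bop a b s x y) z := by
  obtain ⟨h1, h2, h3, h4, h5⟩ := h
  cases s <;> cases t <;> simp only [bop, Bool.false_eq_true, if_true, if_false, reduceIte]
  · exact (h2 x y z).symm
  · exact (h5 x y z).symm
  · exact (h3 x y z).symm
  · exact (h1 x y z).symm

lemma bop_swap (s t : Bool) (x u v : A) :
    bop a b s (bop a b t x u) v = bop a b t (bop a b s x u) v := by
  obtain ⟨h1, h2, h3, h4, h5⟩ := h
  cases s <;> cases t <;> simp only [bop, Bool.false_eq_true, if_true, if_false, reduceIte]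
  · exact (h3 x u v).trans (h4 x u v)
  · exact ((h3 x u v).trans (h4 x u v)).symm

lemma lap_absorb (t : Bool) (l : List (Bool × A)) :
    ∀ (x y : A),
      bop a b t x (leftAssocProd a b y l) = leftAssocProd a b (bop a b t x y) l := by
  induction l with
  | nil => intro x y; rfl
  | cons p l ih =>
    obtain ⟨s, u⟩ := p
    intro x y
    rw [lap_cons, lap_cons, ih, bop_assoc a b h t s x y u]

lemma lap_perm {g₁ g₂ : List Bool} (hg : g₁.Perm g₂) :
    ∀ (x : A) (e : List A), g₁.length ≤ e.length →
      leftAssocProd a b x (g₁.zip e) = leftAssocProd a b x (g₂.zip e) := by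
  induction hg with
  | nil => intros; rfl
  | cons t hg ih =>
    intro x e hl
    cases e with
    | nil => simp at hl
    | cons u e =>
      simp only [List.zip_cons_cons, lap_cons]
      exact ih _ _ (by simpa using hl)
  | swap s t g =>
    intro x e hl
    match e with
    | [] => simp at hl
    | [u] => simp at hl
    | u :: v :: e =>
      simp only [List.zip_cons_cons, lap_cons]
      rw [bop_swap a b h]
  | trans hg₁ hg₂ ih₁ ih₂ =>
    intro x e hl
    rw [ih₁ x e hl, ih₂ x e (hg₁.length_eq ▸ hl)]

omit h in
lemma perm_canonical (g : List Bool) :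
    g.Perm (List.replicate (g.count true) true ++ List.replicate (g.count false) false) := by
  induction g with
  | nil => simp
  | cons t g ih =>
    cases t with
    | true =>
      simpa [List.count_cons, List.replicate_succ] using ih.cons true
    | false =>
      refine (ih.cons false).trans ?_
      simp only [List.count_cons, beq_iff_eq, if_true, if_false, List.replicate_succ,
        Bool.false_eq_true, reduceIte, Nat.add_zero]
      exact List.perm_middle.symm

end Aux


section Main
variable {k A : Type*} [CommRing k] [AddCommGroup A] [Module k A]
  (a b : A →ₗ[k] A →ₗ[k] A) (h : IsTotallyCompatibleDialgebra a b)
include h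

lemma lap_subst (t : Bool) (l₁ l₂ m : List (Bool × A)) (x₀ y₀ : A) :
    leftAssocProd a b x₀ (l₁ ++ (t, leftAssocProd a b y₀ m) :: l₂)
      = leftAssocProd a b x₀ (l₁ ++ (t, y₀) :: (m ++ l₂)) := by
  rw [lap_append, lap_cons, lap_absorb a b h, ← lap_append, ← lap_cons, ← lap_append]

end Main


/-- substituting `μ_{c,d}(y₀,…,y_{c+d})` as the `(p+1)`-st argument of
`μ_{i,j}` (with `p + 1 + r = i + j + 1` arguments in total) gives
`μ_{i,j}(x₁,…,x_p, μ_{c,d}(y₀,…,y_{c+d}), z₁,…,z_r)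
  = μ_{i+c, j+d}(x₁,…,x_p, y₀,…,y_{c+d}, z₁,…,z_r)`. -/
theorem muOp_partial_composition
    {k A : Type*} [CommRing k] [AddCommGroup A] [Module k A]
    (a b : A →ₗ[k] A →ₗ[k] A) (h : IsTotallyCompatibleDialgebra a b)
    (i j c d p r : ℕ) (hpr : p + 1 + r = i + j + 1)
    (xs ys zs : List A)
    (hx : xs.length = p) (hy : ys.length = c + d + 1) (hz : zs.length = r) :
    muOp a b i j (xs ++ muOp a b c d ys :: zs)
      = muOp a b (i + c) (j + d) (xs ++ ys ++ zs) := by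
  cases ys with
  | nil => simp at hy
  | cons y₀ ys' =>
  simp only [List.length_cons] at hy
  have hy' : ys'.length = c + d := by omega
  have key : ∀ G : List Bool, G.count true = i + c → G.count false = j + d →
      G.Perm (List.replicate (i + c) true ++ List.replicate (j + d) false) := by
    intro G e1 e2
    have hp := perm_canonical G
    rwa [e1, e2] at hp
  have hgylen : (List.replicate c true ++ List.replicate d false).length = ys'.length := by
    simp [hy']
  cases xs with
  | nil =>
    simp only [List.length_nil] at hx
    have hr : zs.length = i + j := by omega
    show leftAssocProd a b (leftAssocProd a b y₀
          ((List.replicate c true ++ List.replicate d false).zip ys'))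
        ((List.replicate i true ++ List.replicate j false).zip zs)
      = leftAssocProd a b y₀
        ((List.replicate (i + c) true ++ List.replicate (j + d) false).zip (ys' ++ zs))
    rw [← lap_append, ← List.zip_append hgylen]
    refine lap_perm a b h (key _ ?_ ?_) y₀ (ys' ++ zs) ?_
    · simp [List.count_append, List.count_replicate]
      omega
    · simp [List.count_append, List.count_replicate]
      omega
    · simp
      omega
  | cons x₀ xs' =>
    simp only [List.length_cons] at hx
    have hgl : (List.replicate i true ++ List.replicate j false).length = i + j := by simp
    have hgAlen : ((List.replicate i true ++ List.replicate j false).take xs'.length).length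
        = xs'.length := by
      rw [List.length_take]
      simp [Nat.min_def]
      omega
    obtain ⟨t, gB, hgR⟩ : ∃ t gB,
        (List.replicate i true ++ List.replicate j false).drop xs'.length = t :: gB := by
      cases hd : (List.replicate i true ++ List.replicate j false).drop xs'.length with
      | nil =>
        exfalso
        have hl := congrArg List.length hd
        simp at hl
        omega
      | cons t gB => exact ⟨t, gB, rfl⟩
    set gA := (List.replicate i true ++ List.replicate j false).take xs'.length with hgAdef
    have hsplit : List.replicate i true ++ List.replicate j false = gA ++ t :: gB := by
      conv_lhs => rw [← List.take_append_drop xs'.length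
        (List.replicate i true ++ List.replicate j false)]
      rw [hgR]
    have hct : (gA ++ t :: gB).count true = i := by
      rw [← hsplit]; simp [List.count_append, List.count_replicate]
    have hcf : (gA ++ t :: gB).count false = j := by
      rw [← hsplit]; simp [List.count_append, List.count_replicate]
    have hgBlen : gA.length + (gB.length + 1) = i + j := by
      have hl := congrArg List.length hsplit
      simp at hl
      omega
    show leftAssocProd a b x₀
        ((List.replicate i true ++ List.replicate j false).zip
          (xs' ++ (leftAssocProd a b y₀
            ((List.replicate c true ++ List.replicate d false).zip ys')) :: zs))
      = leftAssocProd a b x₀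
        ((List.replicate (i + c) true ++ List.replicate (j + d) false).zip
          ((xs' ++ (y₀ :: ys')) ++ zs))
    rw [hsplit, List.zip_append (by rw [hgAlen]), List.zip_cons_cons,
      lap_subst a b h, ← List.zip_append hgylen, ← List.zip_cons_cons,
      ← List.zip_append (by rw [hgAlen])]
    simp only [List.append_assoc, List.cons_append]
    refine lap_perm a b h (key _ ?_ ?_) x₀ _ ?_
    · cases t <;>
        (simp [List.count_append, List.count_cons, List.count_replicate] at hct ⊢ <;> omega)
    · cases t <;>
        (simp [List.count_append, List.count_cons, List.count_replicate] at hcf ⊢ <;> omega)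
    · simp [hgAlen, hy']
      omega
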